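/- Let Γ ⊆ ℝⁿ be a regular open convex cone and ψ a continuous function on Γ with 0 ≤ R_ψ < ∞, where R_ψ = limsup_{y ∈ Γ, |y| → ∞} ψ(y)/|y|. Then for every α ∈ (0,∞), U_α(Γ,ψ) ⊆ Γ* + {t ∈ ℝⁿ : |t| ≤ R_ψ}, and also U_∞(Γ,ψ) ⊆ Γ* + {t ∈ ℝⁿ : |t| ≤ R_ψ}. -/

import Mathlib

open MeasureTheory Real Filter Set Metric
open scoped ENNReal Topology Pointwise

noncomputable section

/-- Real points of `ℝⁿ` (Euclidean). -/
abbrev RS (n : ℕ) := EuclideanSpace ℝ (Fin n)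
/-- Complex points of `ℂⁿ` (Euclidean). -/
abbrev CS (n : ℕ) := EuclideanSpace ℂ (Fin n)

/-- The point `z = x + i y` of `ℂⁿ`. -/
def tmk {n : ℕ} (x y : RS n) : CS n :=
  (WithLp.equiv 2 (Fin n → ℂ)).symm fun j => (x j : ℂ) + (y j : ℂ) * Complex.I

/-- The tube `T_B = ℝⁿ + iB` over a base `B ⊆ ℝⁿ`. -/
def tube {n : ℕ} (B : Set (RS n)) : Set (CS n) :=
  {z | ((WithLp.equiv 2 (Fin n → ℝ)).symm fun j => (z j).im) ∈ B}

/-- Real dot product `t ⬝ y`. -/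
def rdot {n : ℕ} (t y : RS n) : ℝ := ∑ j, t j * y j

/-- Complex bilinear pairing `t ⬝ z` of a real vector with a complex vector. -/
def cdot {n : ℕ} (t : RS n) (z : CS n) : ℂ := ∑ j, (t j : ℂ) * z j

/-- The set `U_α(B,ψ) = {t ∈ ℝⁿ : ∫_B e^{−2πα(t·y + ψ(y))} dy < ∞}`. -/
def Uset {n : ℕ} (B : Set (RS n)) (ψ : RS n → ℝ) (α : ℝ) : Set (RS n) :=
  {t | ∫⁻ y in B, ENNReal.ofReal (Real.exp (-(2 * Real.pi * α * (rdot t y + ψ y)))) < ⊤}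

/-- An open cone: a nonempty open set not containing `0`, closed under positive
linear combinations (hence convex). -/
def IsOpenConvexCone {n : ℕ} (Γ : Set (RS n)) : Prop :=
  IsOpen Γ ∧ Γ.Nonempty ∧ (0 : RS n) ∉ Γ ∧
    ∀ x ∈ Γ, ∀ y ∈ Γ, ∀ a b : ℝ, 0 < a → 0 < b → a • x + b • y ∈ Γ

/-- The dual cone `Γ* = {y : y·x ≥ 0 for all x ∈ Γ}`. -/
def dualCone {n : ℕ} (Γ : Set (RS n)) : Set (RS n) :=
  {y | ∀ x ∈ Γ, 0 ≤ rdot y x}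

/-- A regular (open convex) cone: the dual cone has nonempty interior. -/
def IsRegularCone {n : ℕ} (Γ : Set (RS n)) : Prop :=
  IsOpenConvexCone Γ ∧ (interior (dualCone Γ)).Nonempty

/-- The filter of `y ∈ Γ` with `|y| → ∞`. -/
def coneAtInfty {n : ℕ} (Γ : Set (RS n)) : Filter (RS n) :=
  Filter.comap norm Filter.atTop ⊓ Filter.principal Γ

/-- The set `U_∞(Γ,ψ) = {t : inf_{y ∈ Γ} (y·t + ψ(y)) > −∞}`. -/
def UsetInf {n : ℕ} (Γ : Set (RS n)) (ψ : RS n → ℝ) : Set (RS n) :=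
  {t | BddBelow ((fun y => rdot y t + ψ y) '' Γ)}

/-!
If `t` lies outside `Γ* + B̄(0, R_ψ)`, projecting `t` onto the closed convex cone `Γ*` and using
the bipolar theorem yields a direction `e ∈ Γ` and a slope `R' > R_ψ` with `t·e + R'|e| < 0`.
Since `ψ(y) ≤ R'|y|` far out in `Γ`, the exponent `t·y + ψ(y)` is at most `s (t·e + R'|e|) + C`
on a ball of fixed radius around `s e`, which stays inside `Γ`. Along the ray `s ↦ s e` the
exponent thus tends to `-∞`, so `inf (y·t + ψ y) = -∞` and the integrals over these balls diverge.
-/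

open scoped RealInnerProductSpace

lemma rdot_eq_inner {n : ℕ} (t y : RS n) : rdot t y = ⟪t, y⟫ := by
  simp [rdot, PiLp.inner_apply, mul_comm]

lemma rdot_comm {n : ℕ} (t y : RS n) : rdot t y = rdot y t := by
  simp only [rdot, mul_comm]

lemma dualCone_eq_innerDual_closure {n : ℕ} (Γ : Set (RS n)) :
    dualCone Γ = (ProperCone.innerDual (closure Γ) : Set (RS n)) := by
  ext y
  simp only [dualCone, mem_ofPred_eq, SetLike.mem_coe, ProperCone.mem_innerDual,
    rdot_eq_inner, real_inner_comm y]
  refine ⟨fun h x hx => ?_, fun h x hx => h (subset_closure hx)⟩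
  exact closure_minimal (t := {a | 0 ≤ ⟪y, a⟫}) h
    (isClosed_le continuous_const (continuous_const.inner continuous_id)) hx

/-- With `z` the projection of `t` onto the dual cone and `v = t - z`, `v` is orthogonal to `z`
and `-v` lies in the double dual `K`, so `⟪t, -v⟫ = -‖v‖² < -R‖v‖`. -/
theorem ProperCone.exists_inner_lt_neg_mul_norm {E : Type*} [NormedAddCommGroup E]
    [InnerProductSpace ℝ E] [CompleteSpace E] (K : ProperCone ℝ E) {t : E} {R : ℝ} (hR : 0 ≤ R)
    (ht : t ∉ (ProperCone.innerDual (K : Set E) : Set E) + closedBall 0 R) :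
    ∃ e ∈ K, ⟪t, e⟫ < -(R * ‖e‖) := by
  set D := ProperCone.innerDual (K : Set E)
  obtain ⟨z, hzD, hz⟩ :=
    exists_norm_eq_iInf_of_complete_convex D.nonempty D.isClosed.isComplete D.convex t
  have hproj := (norm_eq_iInf_iff_real_inner_le_zero D.convex hzD).1 hz
  set v := t - z
  have hRv : R < ‖v‖ := by
    by_contra! h
    exact ht ⟨z, hzD, v, mem_closedBall_zero_iff.2 h, add_sub_cancel _ _⟩
  have hvz : ⟪v, z⟫ = 0 := by
    have h0 := hproj 0 D.zero_mem
    have h2 := hproj ((2 : ℝ) • z) (D.smul_mem hzD zero_le_two)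
    rw [zero_sub, inner_neg_right] at h0
    rw [two_smul, add_sub_cancel_right] at h2
    linarith
  have hvD : -v ∈ K := by
    rw [← ProperCone.innerDual_innerDual K, ProperCone.mem_innerDual]
    intro w hw
    have := hproj w hw
    rw [inner_sub_right, hvz, sub_zero] at this
    rw [inner_neg_right, real_inner_comm]
    linarith
  refine ⟨-v, hvD, ?_⟩
  have htv : t = z + v := (add_sub_cancel z t).symm
  rw [norm_neg, inner_neg_right, htv, inner_add_left, real_inner_comm, hvz,
    real_inner_self_eq_norm_sq]
  nlinarith [norm_nonneg v]

lemma inner_add_mul_norm_le {E : Type*} [NormedAddCommGroup E] [InnerProductSpace ℝ E]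
    (t x y : E) {r : ℝ} (hr : 0 ≤ r) :
    ⟪t, y⟫ + r * ‖y‖ ≤ ⟪t, x⟫ + r * ‖x‖ + (‖t‖ + r) * ‖y - x‖ := by
  have hinner : ⟪t, y - x⟫ ≤ ‖t‖ * ‖y - x‖ := real_inner_le_norm _ _
  have hnorm : ‖y‖ ≤ ‖x‖ + ‖y - x‖ := norm_le_insert' y x
  rw [inner_sub_right] at hinner
  nlinarith

lemma exists_le_mul_norm_of_limsup_lt {n : ℕ} {Γ : Set (RS n)} {ψ : RS n → ℝ} {r : ℝ}
    (hbd : IsBoundedUnder (· ≤ ·) (coneAtInfty Γ) fun y => ψ y / ‖y‖)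
    (hlt : limsup (fun y => ψ y / ‖y‖) (coneAtInfty Γ) < r) :
    ∃ M, ∀ y ∈ Γ, M ≤ ‖y‖ → ψ y ≤ r * ‖y‖ := by
  have h := eventually_lt_of_limsup_lt hlt hbd
  rw [coneAtInfty, eventually_inf_principal, eventually_comap, eventually_atTop] at h
  obtain ⟨M, hM⟩ := h
  refine ⟨max M 1, fun y hy hMy => ?_⟩
  have hy0 : 0 < ‖y‖ := lt_of_lt_of_le one_pos ((le_max_right _ _).trans hMy)
  exact (div_le_iff₀ hy0).1 (hM ‖y‖ ((le_max_left _ _).trans hMy) y rfl hy).le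

namespace IsOpenConvexCone

variable {n : ℕ} {Γ : Set (RS n)}

lemma smul_mem (hΓ : IsOpenConvexCone Γ) {x : RS n} (hx : x ∈ Γ) {c : ℝ} (hc : 0 < c) :
    c • x ∈ Γ := by
  simpa [← add_smul] using hΓ.2.2.2 x hx x hx (c / 2) (c / 2) (by positivity) (by positivity)

lemma exists_properCone_coe_eq_closure (hΓ : IsOpenConvexCone Γ) :
    ∃ K : ProperCone ℝ (RS n), (K : Set (RS n)) = closure Γ := by
  let C : ConvexCone ℝ (RS n) :=
    { carrier := Γ
      smul_mem' := fun _ hc _ hx => hΓ.smul_mem hx hc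
      add_mem' := fun x hx y hy => by simpa using hΓ.2.2.2 x hx y hy 1 1 one_pos one_pos }
  have hC : C.closure.Pointed :=
    ConvexCone.Pointed.of_nonempty_of_isClosed (hΓ.2.1.closure) isClosed_closure
  exact ⟨⟨C.closure.toPointedCone hC, isClosed_closure⟩, rfl⟩

theorem exists_mem_inner_add_mul_norm_neg (hΓ : IsOpenConvexCone Γ) {t : RS n} {R : ℝ}
    (hR : 0 ≤ R) (ht : t ∉ dualCone Γ + closedBall 0 R) :
    ∃ e ∈ Γ, ∃ R' > R, ⟪t, e⟫ + R' * ‖e‖ < 0 := by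
  obtain ⟨K, hK⟩ := hΓ.exists_properCone_coe_eq_closure
  rw [dualCone_eq_innerDual_closure, ← hK] at ht
  obtain ⟨e₀, he₀, hte₀⟩ := K.exists_inner_lt_neg_mul_norm hR ht
  rw [← SetLike.mem_coe, hK] at he₀
  have hev : ∀ᶠ r in 𝓝[>] R, ⟪t, e₀⟫ + r * ‖e₀‖ < 0 :=
    nhdsWithin_le_nhds <| (by fun_prop : Continuous fun r : ℝ => ⟪t, e₀⟫ + r * ‖e₀‖).tendsto R
      |>.eventually (gt_mem_nhds (by linarith))
  obtain ⟨R', hR'e₀, hRR'⟩ := (hev.and self_mem_nhdsWithin).exists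
  obtain ⟨e, he, heΓ⟩ := mem_closure_iff.1 he₀ {x | ⟪t, x⟫ + R' * ‖x‖ < 0}
    (isOpen_lt (by fun_prop) continuous_const) hR'e₀
  exact ⟨e, heΓ, R', hRR', he⟩

theorem exists_ball_smul_subset (hΓ : IsOpenConvexCone Γ) {e : RS n} (he : e ∈ Γ) :
    ∃ δ > 0, ∀ s ≥ (1 : ℝ), ball (s • e) δ ⊆ Γ := by
  obtain ⟨δ, hδ, hball⟩ := Metric.isOpen_iff.1 hΓ.1 e he
  refine ⟨δ, hδ, fun s hs y hy => ?_⟩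
  have hs0 : 0 < s := by linarith
  have hy' : s⁻¹ • y ∈ ball e δ := by
    rw [mem_ball, dist_eq_norm] at hy ⊢
    calc ‖s⁻¹ • y - e‖ = s⁻¹ * ‖y - s • e‖ := by
          rw [← norm_smul_of_nonneg (inv_nonneg.2 hs0.le), smul_sub, inv_smul_smul₀ hs0.ne']
      _ ≤ ‖y - s • e‖ := mul_le_of_le_one_left (norm_nonneg _) (inv_le_one_of_one_le₀ hs)
      _ < δ := hy
  simpa [smul_inv_smul₀ hs0.ne'] using hΓ.smul_mem (hball hy') hs0

theorem exists_bound_on_balls (hΓ : IsOpenConvexCone Γ) {e : RS n} (he : e ∈ Γ)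
    {ψ : RS n → ℝ} {r M : ℝ} (hr : 0 ≤ r) (hψ : ∀ y ∈ Γ, M ≤ ‖y‖ → ψ y ≤ r * ‖y‖) (t : RS n) :
    ∃ δ > 0, ∃ C, ∀ᶠ s in atTop, ∀ y ∈ ball (s • e) δ,
      y ∈ Γ ∧ rdot t y + ψ y ≤ s * (⟪t, e⟫ + r * ‖e‖) + C := by
  obtain ⟨δ, hδ, hsub⟩ := hΓ.exists_ball_smul_subset he
  have he0 : 0 < ‖e‖ := norm_pos_iff.2 (ne_of_mem_of_not_mem he hΓ.2.2.1)
  have hlarge : ∀ᶠ s in atTop, M + δ ≤ s * ‖e‖ :=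
    (tendsto_id.atTop_mul_const he0).eventually_ge_atTop _
  refine ⟨δ, hδ, (‖t‖ + r) * δ, ?_⟩
  filter_upwards [eventually_ge_atTop 1, hlarge] with s hs1 hsM y hy
  have hs0 : 0 ≤ s := zero_le_one.trans hs1
  have hyΓ := hsub s hs1 hy
  rw [mem_ball, dist_eq_norm] at hy
  have hnorm : M ≤ ‖y‖ := by
    have := norm_sub_norm_le (s • e) y
    rw [norm_smul_of_nonneg hs0, norm_sub_rev] at this
    linarith
  refine ⟨hyΓ, ?_⟩
  calc rdot t y + ψ y ≤ ⟪t, y⟫ + r * ‖y‖ := by rw [rdot_eq_inner]; linarith [hψ y hyΓ hnorm]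
    _ ≤ ⟪t, s • e⟫ + r * ‖s • e‖ + (‖t‖ + r) * ‖y - s • e‖ := inner_add_mul_norm_le _ _ _ hr
    _ ≤ s * (⟪t, e⟫ + r * ‖e‖) + (‖t‖ + r) * δ := by
      rw [real_inner_smul_right, norm_smul_of_nonneg hs0, mul_add, mul_left_comm]
      gcongr

end IsOpenConvexCone

section Divergence

variable {n : ℕ} {Γ : Set (RS n)} {ψ : RS n → ℝ} {t e : RS n} {c C : ℝ}

lemma tendsto_mul_add_atBot (hc : c < 0) (C : ℝ) :
    Tendsto (fun s : ℝ => s * c + C) atTop atBot :=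
  tendsto_atBot_add_const_right _ C (tendsto_id.atTop_mul_const_of_neg hc)

lemma notMem_UsetInf (hc : c < 0)
    (h : ∀ᶠ s in atTop, s • e ∈ Γ ∧ rdot t (s • e) + ψ (s • e) ≤ s * c + C) :
    t ∉ UsetInf Γ ψ := by
  rintro ⟨b, hb⟩
  obtain ⟨s, ⟨hsΓ, hs⟩, hsb⟩ :=
    (h.and ((tendsto_mul_add_atBot hc C).eventually_lt_atBot b)).exists
  have : b ≤ rdot (s • e) t + ψ (s • e) := hb ⟨s • e, hsΓ, rfl⟩
  rw [rdot_comm] at hs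
  linarith

lemma notMem_Uset {α δ : ℝ} (hα : 0 < α) (hδ : 0 < δ) (hc : c < 0)
    (h : ∀ᶠ s in atTop, ∀ y ∈ ball (s • e) δ, y ∈ Γ ∧ rdot t y + ψ y ≤ s * c + C) :
    t ∉ Uset Γ ψ α := by
  intro ht
  rw [Uset, mem_ofPred_eq] at ht
  set I := ∫⁻ y in Γ, ENNReal.ofReal (exp (-(2 * π * α * (rdot t y + ψ y))))
  set V := volume (ball (0 : RS n) δ)
  have hlb : ∀ᶠ s in atTop, ENNReal.ofReal (exp (-(2 * π * α * (s * c + C)))) * V ≤ I := by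
    filter_upwards [h] with s hs
    calc ENNReal.ofReal (exp (-(2 * π * α * (s * c + C)))) * V
        = ∫⁻ _ in ball (s • e) δ, ENNReal.ofReal (exp (-(2 * π * α * (s * c + C)))) := by
          rw [setLIntegral_const, Measure.addHaar_ball_center]
      _ ≤ ∫⁻ y in ball (s • e) δ, ENNReal.ofReal (exp (-(2 * π * α * (rdot t y + ψ y)))) :=
          setLIntegral_mono' measurableSet_ball fun y hy => by
            gcongr ENNReal.ofReal (exp (-(2 * π * α * ?_))); exact (hs y hy).2
      _ ≤ I := lintegral_mono_set fun y hy => (hs y hy).1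
  have hexp : Tendsto (fun s : ℝ => -(2 * π * α * (s * c + C))) atTop atTop :=
    tendsto_neg_atBot_atTop.comp ((tendsto_mul_add_atBot hc C).const_mul_atBot (by positivity))
  have htop := ENNReal.Tendsto.mul_const (b := V)
    (ENNReal.tendsto_ofReal_atTop.comp (tendsto_exp_atTop.comp hexp)) (.inl ENNReal.top_ne_zero)
  rw [ENNReal.top_mul (measure_ball_pos volume 0 hδ).ne'] at htop
  exact ht.ne (top_le_iff.1 (le_of_tendsto htop hlb))

end Divergence

theorem statement9_general {n : ℕ} (Γ : Set (RS n)) (hΓ : IsRegularCone Γ)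
    (ψ : RS n → ℝ) (Rψ : ℝ) (hR0 : 0 ≤ Rψ)
    (hbd : Filter.IsBoundedUnder (· ≤ ·) (coneAtInfty Γ) fun y => ψ y / ‖y‖)
    (hlim : Filter.limsup (fun y => ψ y / ‖y‖) (coneAtInfty Γ) = Rψ) :
    (∀ α : ℝ, 0 < α →
        Uset Γ ψ α ⊆ dualCone Γ + Metric.closedBall (0 : RS n) Rψ) ∧
      UsetInf Γ ψ ⊆ dualCone Γ + Metric.closedBall (0 : RS n) Rψ := by
  have escape : ∀ t ∉ dualCone Γ + closedBall 0 Rψ, ∃ e, ∃ δ > 0, ∃ c < 0, ∃ C,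
      ∀ᶠ s in atTop, ∀ y ∈ ball (s • e) δ, y ∈ Γ ∧ rdot t y + ψ y ≤ s * c + C := by
    intro t ht
    obtain ⟨e, he, r, hRr, hc⟩ := hΓ.1.exists_mem_inner_add_mul_norm_neg hR0 ht
    obtain ⟨M, hM⟩ := exists_le_mul_norm_of_limsup_lt hbd (hlim.trans_lt hRr)
    obtain ⟨δ, hδ, C, hball⟩ := hΓ.1.exists_bound_on_balls he (hR0.trans hRr.le) hM t
    exact ⟨e, δ, hδ, _, hc, C, hball⟩
  refine ⟨fun α hα t htU => ?_, fun t htU => ?_⟩ <;> by_contra ht <;>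
    obtain ⟨e, δ, hδ, c, hc, C, hball⟩ := escape t ht
  · exact notMem_Uset hα hδ hc hball htU
  · exact notMem_UsetInf hc (hball.mono fun s hs => hs (s • e) (mem_ball_self hδ)) htU

/-- Lemma 2 of the paper: for a regular open convex cone `Γ` and `ψ ∈ C(Γ)` with
`0 ≤ R_ψ = limsup_{y∈Γ,|y|→∞} ψ(y)/|y| < ∞`, every `U_α(Γ,ψ)` (`0 < α ≤ ∞`) is
contained in `Γ* + \overline{D(0,R_ψ)}`. -/
theorem statement9 {n : ℕ} (Γ : Set (RS n)) (hΓ : IsRegularCone Γ)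
    (ψ : RS n → ℝ) (hψ : ContinuousOn ψ Γ) (Rψ : ℝ) (hR0 : 0 ≤ Rψ)
    (hbd : Filter.IsBoundedUnder (· ≤ ·) (coneAtInfty Γ) fun y => ψ y / ‖y‖)
    (hlim : Filter.limsup (fun y => ψ y / ‖y‖) (coneAtInfty Γ) = Rψ) :
    (∀ α : ℝ, 0 < α →
        Uset Γ ψ α ⊆ dualCone Γ + Metric.closedBall (0 : RS n) Rψ) ∧
      UsetInf Γ ψ ⊆ dualCone Γ + Metric.closedBall (0 : RS n) Rψ :=
  statement9_general Γ hΓ ψ Rψ hR0 hbd hlim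

end
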